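/- Let G be a graph, S a stable set of G, and suppose some vertex j ∉ S has exactly one neighbor i in S. Let k = |S|, u = χ^S/k, ũ = χ^{(S\{i})∪{j}}/k, and z = t u + (1−t) ũ for t ∈ (0,1). Then f_G(z) = 1/k = f_G(u), i.e., the whole segment between u and ũ has constant objective value. -/

import Mathlib

open Matrix Finset
open scoped Classical

def IsStable {n : ℕ} (G : SimpleGraph (Fin n)) (S : Finset (Fin n)) : Prop :=
  ∀ i ∈ S, ∀ j ∈ S, ¬ G.Adj i j

noncomputable def alpha {n : ℕ} (G : SimpleGraph (Fin n)) : ℕ :=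
  sSup {k | ∃ S : Finset (Fin n), IsStable G S ∧ S.card = k}

noncomputable def indic {n : ℕ} (S : Finset (Fin n)) : Fin n → ℝ :=
  fun i => if i ∈ S then 1 else 0

noncomputable def qform {n : ℕ} (M : Matrix (Fin n) (Fin n) ℝ) (x : Fin n → ℝ) : ℝ :=
  x ⬝ᵥ M.mulVec x

noncomputable def fG {n : ℕ} (G : SimpleGraph (Fin n)) (x : Fin n → ℝ) : ℝ :=
  qform (1 + G.adjMatrix ℝ) x

noncomputable def globMin {n : ℕ} (f : (Fin n → ℝ) → ℝ) : Set (Fin n → ℝ) :=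
  {x | x ∈ stdSimplex ℝ (Fin n) ∧ ∀ y ∈ stdSimplex ℝ (Fin n), f x ≤ f y}


/-! With `M = 1 + A_G` symmetric, `f_G (t • u + (1 - t) • ũ)` expands to
`t² f_G u + (1 - t)² f_G ũ + 2 t (1 - t) (u ⬝ᵥ M *ᵥ ũ)`. Both `S` and `S' = (S \ {i}) ∪ {j}` are
stable of size `k`, so `f_G u = f_G ũ = 1 / k`; and `χ^S ⬝ᵥ M *ᵥ χ^{S'}` counts the `k - 1` common
vertices plus the single edge `ij`, so the cross term is `1 / k` as well. The whole expression is
therefore `(t + (1 - t))² / k`. -/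

section QuadraticForm

variable {n : ℕ} {M : Matrix (Fin n) (Fin n) ℝ}

lemma qform_smul (M : Matrix (Fin n) (Fin n) ℝ) (c : ℝ) (x : Fin n → ℝ) :
    qform M (c • x) = c ^ 2 * qform M x := by
  simp only [qform, mulVec_smul, dotProduct_smul, smul_dotProduct, smul_eq_mul]
  ring

lemma Matrix.IsSymm.dotProduct_mulVec_comm (hM : M.IsSymm) (x y : Fin n → ℝ) :
    y ⬝ᵥ M *ᵥ x = x ⬝ᵥ M *ᵥ y := by
  rw [dotProduct_mulVec, dotProduct_comm, ← vecMul_transpose, hM.eq]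

lemma Matrix.IsSymm.qform_smul_add_smul (hM : M.IsSymm) (a b : ℝ) (x y : Fin n → ℝ) :
    qform M (a • x + b • y) =
      a ^ 2 * qform M x + b ^ 2 * qform M y + 2 * a * b * (x ⬝ᵥ M *ᵥ y) := by
  simp only [qform, mulVec_add, mulVec_smul, dotProduct_add, add_dotProduct, dotProduct_smul,
    smul_dotProduct, smul_eq_mul, hM.dotProduct_mulVec_comm x y]
  ring

lemma indic_dotProduct_mulVec_indic (M : Matrix (Fin n) (Fin n) ℝ) (S T : Finset (Fin n)) :
    indic S ⬝ᵥ M *ᵥ indic T = ∑ q ∈ T, ∑ p ∈ S, M p q := by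
  simp only [dotProduct, indic, mulVec, mul_ite, mul_one, mul_zero, sum_ite_mem, univ_inter,
    ite_mul, one_mul, zero_mul]
  exact Finset.sum_comm

end QuadraticForm

lemma Finset.card_insert_erase {α : Type*} [DecidableEq α] {s : Finset α} {a b : α} (ha : a ∈ s)
    (hb : b ∉ s) : #(insert b (s.erase a)) = #s := by
  rw [card_insert_of_notMem fun h => hb (mem_of_mem_erase h), card_erase_add_one ha]

section StableSets

variable {n : ℕ} {G : SimpleGraph (Fin n)}

lemma sum_one_add_adjMatrix_apply (G : SimpleGraph (Fin n)) (S : Finset (Fin n)) (q : Fin n) :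
    ∑ p ∈ S, (1 + G.adjMatrix ℝ) p q = (if q ∈ S then 1 else 0) + #(S.filter (G.Adj · q)) := by
  simp [Matrix.one_apply, Finset.sum_add_distrib, Finset.sum_boole]

lemma IsStable.sum_one_add_adjMatrix_apply_of_mem {S : Finset (Fin n)} (hS : IsStable G S)
    {q : Fin n} (hq : q ∈ S) : ∑ p ∈ S, (1 + G.adjMatrix ℝ) p q = 1 := by
  rw [sum_one_add_adjMatrix_apply, if_pos hq, Finset.filter_false_of_mem
    fun p hp => hS p hp q hq]
  simp

lemma IsStable.fG_smul_indic {S : Finset (Fin n)} (hS : IsStable G S) (c : ℝ) :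
    fG G (c • indic S) = c ^ 2 * #S := by
  rw [fG, qform_smul, qform, indic_dotProduct_mulVec_indic,
    Finset.sum_congr rfl fun q hq => hS.sum_one_add_adjMatrix_apply_of_mem hq]
  simp

lemma IsStable.fG_inv_card_smul_indic {S : Finset (Fin n)} (hS : IsStable G S) :
    fG G ((#S : ℝ)⁻¹ • indic S) = 1 / #S := by
  rw [hS.fG_smul_indic]
  rcases eq_or_ne (#S : ℝ) 0 with hS | hS <;> field_simp [hS]

lemma IsStable.insert_erase {S : Finset (Fin n)} (hS : IsStable G S) {i j : Fin n}
    (hfilter : S.filter (G.Adj · j) = {i}) : IsStable G (insert j (S.erase i)) := by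
  have honly : ∀ p ∈ S.erase i, ¬ G.Adj p j := fun p hp hpj => by
    have : p ∈ S.filter (G.Adj · j) := Finset.mem_filter.mpr ⟨Finset.mem_of_mem_erase hp, hpj⟩
    rw [hfilter, Finset.mem_singleton] at this
    exact Finset.ne_of_mem_erase hp this
  intro p hp q hq
  rcases Finset.mem_insert.mp hp with hpj | hp <;> rcases Finset.mem_insert.mp hq with hqj | hq
  · exact hpj ▸ hqj ▸ G.irrefl
  · exact hpj ▸ fun h => honly q hq h.symm
  · exact hqj ▸ honly p hp
  · exact hS p (Finset.mem_of_mem_erase hp) q (Finset.mem_of_mem_erase hq)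

lemma IsStable.indic_dotProduct_mulVec_indic_insert_erase {S : Finset (Fin n)} (hS : IsStable G S)
    {i j : Fin n} (hj : j ∉ S) (hfilter : S.filter (G.Adj · j) = {i}) :
    indic S ⬝ᵥ (1 + G.adjMatrix ℝ) *ᵥ indic (insert j (S.erase i)) = #S := by
  have hi : i ∈ S := Finset.mem_of_mem_filter i (hfilter ▸ Finset.mem_singleton_self i)
  rw [indic_dotProduct_mulVec_indic,
    Finset.sum_insert fun h => hj (Finset.mem_of_mem_erase h),
    sum_one_add_adjMatrix_apply, if_neg hj, hfilter,
    Finset.sum_congr rfl fun q hq =>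
      hS.sum_one_add_adjMatrix_apply_of_mem (Finset.mem_of_mem_erase hq)]
  simp [Finset.card_erase_of_mem hi, Nat.cast_sub (Finset.card_pos.mpr ⟨i, hi⟩)]

end StableSets

theorem stmt_16 (n : ℕ) (G : SimpleGraph (Fin n)) (S : Finset (Fin n))
    (hS : IsStable G S) (i j : Fin n) (hj : j ∉ S)
    (hfilter : S.filter (fun s => G.Adj s j) = {i}) :
    fG G ((S.card : ℝ)⁻¹ • indic S) = 1 / (S.card : ℝ) ∧
      ∀ t ∈ Set.Ioo (0:ℝ) 1,
        fG G (t • ((S.card : ℝ)⁻¹ • indic S) +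
          (1 - t) • ((S.card : ℝ)⁻¹ • indic (insert j (S.erase i)))) = 1 / (S.card : ℝ) := by
  have hi : i ∈ S := Finset.mem_of_mem_filter i (hfilter ▸ Finset.mem_singleton_self i)
  have hu : fG G ((#S : ℝ)⁻¹ • indic S) = 1 / #S := hS.fG_inv_card_smul_indic
  have hu' : fG G ((#S : ℝ)⁻¹ • indic (insert j (S.erase i))) = 1 / #S := by
    rw [← Finset.card_insert_erase hi hj]
    exact (hS.insert_erase hfilter).fG_inv_card_smul_indic
  have hcross : ((#S : ℝ)⁻¹ • indic S) ⬝ᵥ (1 + G.adjMatrix ℝ) *ᵥ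
      ((#S : ℝ)⁻¹ • indic (insert j (S.erase i))) = 1 / #S := by
    have hk : (#S : ℝ) ≠ 0 := Nat.cast_ne_zero.mpr (Finset.card_ne_zero_of_mem hi)
    rw [mulVec_smul, dotProduct_smul, smul_dotProduct,
      hS.indic_dotProduct_mulVec_indic_insert_erase hj hfilter, smul_eq_mul, smul_eq_mul]
    field_simp
  refine ⟨hu, fun t _ => ?_⟩
  rw [fG, (isSymm_one.add G.isSymm_adjMatrix).qform_smul_add_smul, ← fG, ← fG, hu, hu', hcross]
  ring
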